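/- Let k be a field, d ≥ 1, and φ₁,...,φ_d forms of degree d over k (in n₁,...,n_d variables respectively). Over the Laurent series field K = k((t)), the form φ₁(X₁) + t·φ₂(X₂) + ... + t^{d-1}·φ_d(X_d) is anisotropic over K if and only if each φ_i is anisotropic over k. -/

import Mathlib

/-!
After clearing denominators, a nontrivial zero over `k((t))` of the homogeneous form
`∑ tⁱ φᵢ(Xᵢ)` may be taken with coordinates in `k[[t]]`. Comparing the coefficients of
`t⁰, t¹, …, t^(d-1)` shows block by block that every coordinate is divisible by `t`: once the
blocks `i' < i` vanish modulo `t`, homogeneity makes their terms multiples of `t^(i' + d)`, so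
the coefficient of `tⁱ` is `φᵢ` evaluated at the reduction of the `i`-th block, and
anisotropy of `φᵢ` kills that reduction. Dividing by `t` yields another zero, so by descent
all coordinates are divisible by every power of `t`, hence vanish. Conversely, a zero of
`φᵢ` over `k` gives a zero supported on the `i`-th block.
-/

open MvPolynomial
open scoped PowerSeries LaurentSeries

/-- A form (polynomial) is anisotropic if its only zero is the trivial one. -/
def Anisotropic {k : Type*} [CommSemiring k] {σ : Type*} (φ : MvPolynomial σ k) : Prop :=
  ∀ x : σ → k, eval x φ = 0 → x = 0

namespace MvPolynomial.IsHomogeneous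

variable {R σ : Type*} [CommSemiring R] {φ : MvPolynomial σ R} {m : ℕ}

theorem eval_smul (hφ : φ.IsHomogeneous m) (c : R) (x : σ → R) :
    eval (c • x) φ = c ^ m * eval x φ := by
  rw [eval_eq, eval_eq, Finset.mul_sum]
  refine Finset.sum_congr rfl fun e he => ?_
  have hdeg := hφ (mem_support_iff.mp he)
  simp only [Finsupp.weight_apply, Pi.one_apply, smul_eq_mul, mul_one, Finsupp.sum] at hdeg
  simp_rw [Pi.smul_apply, smul_eq_mul, mul_pow]
  rw [Finset.prod_mul_distrib, Finset.prod_pow_eq_pow_sum, hdeg]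
  ring

theorem pow_dvd_eval (hφ : φ.IsHomogeneous m) {a : R} {x : σ → R} (hx : ∀ j, a ∣ x j) :
    a ^ m ∣ eval x φ := by
  choose z hz using hx
  rw [show x = a • z from _root_.funext hz]
  exact ⟨_, hφ.eval_smul a z⟩

theorem constantCoeff_eq_zero (hφ : φ.IsHomogeneous m) (hm : m ≠ 0) : constantCoeff φ = 0 := by
  rw [constantCoeff_eq]
  exact hφ.coeff_eq_zero (by simpa using hm.symm)

end MvPolynomial.IsHomogeneous

theorem Anisotropic.map_algebraMap {A K σ : Type*} [CommRing A] [Field K] [Algebra A K]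
    [IsFractionRing A K] [Finite σ] {Q : MvPolynomial σ A} {m : ℕ} (hQ : Q.IsHomogeneous m)
    (h : Anisotropic Q) : Anisotropic (map (algebraMap A K) Q) := by
  intro x hx
  have : Nontrivial A := (algebraMap A K).domain_nontrivial
  obtain ⟨⟨b, hb⟩, hint⟩ :=
    IsLocalization.exist_integer_multiples_of_finite (nonZeroDivisors A) x
  choose y hy using hint
  have hyx : algebraMap A K ∘ y = algebraMap A K b • x :=
    funext fun s => (hy s).trans (Algebra.smul_def _ _)
  have hy0 : y = 0 := h y <| IsFractionRing.injective A K <| by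
    rw [map_eval, hyx, (hQ.map _).eval_smul, hx, mul_zero, map_zero]
  have hb0 : algebraMap A K b ≠ 0 := IsFractionRing.to_map_ne_zero_of_mem_nonZeroDivisors hb
  funext s
  simpa [hy0, hb0] using congrFun hyx s

section DiagonalForm

variable {R : Type*} [CommSemiring R] {d : ℕ} {σ : Fin d → Type*}

noncomputable def diagonalForm (t : R) (ψ : ∀ i, MvPolynomial (σ i) R) :
    MvPolynomial (Σ i, σ i) R :=
  ∑ i : Fin d, C (t ^ (i : ℕ)) * rename (Sigma.mk i) (ψ i)

theorem eval_diagonalForm (t : R) (ψ : ∀ i, MvPolynomial (σ i) R) (x : (Σ i, σ i) → R) :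
    eval x (diagonalForm t ψ) = ∑ i : Fin d, t ^ (i : ℕ) * eval (x ∘ Sigma.mk i) (ψ i) := by
  simp only [diagonalForm, map_sum, eval_mul, eval_C, eval_rename]

theorem isHomogeneous_diagonalForm {m : ℕ} (t : R) {ψ : ∀ i, MvPolynomial (σ i) R}
    (hψ : ∀ i, (ψ i).IsHomogeneous m) : (diagonalForm t ψ).IsHomogeneous m :=
  IsHomogeneous.sum _ _ _ fun i _ => by
    simpa only [zero_add] using (isHomogeneous_C _ _).mul (hψ i).rename_isHomogeneous

theorem map_diagonalForm {S : Type*} [CommSemiring S] (f : R →+* S) (t : R)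
    (ψ : ∀ i, MvPolynomial (σ i) R) :
    map f (diagonalForm t ψ) = diagonalForm (f t) fun i => map f (ψ i) := by
  simp only [diagonalForm, map_sum, map_mul, map_C, map_pow, map_rename]

theorem Anisotropic.of_diagonalForm {k K : Type*} [CommSemiring k] [CommSemiring K]
    {f : k →+* K} (hf : Function.Injective f) {t : K} {φ : ∀ i, MvPolynomial (σ i) k}
    (hφ : ∀ i, constantCoeff (φ i) = 0) (h : Anisotropic (diagonalForm t fun i => map f (φ i)))
    (i : Fin d) : Anisotropic (φ i) := by
  intro x hx
  set y : (Σ i, σ i) → K := Function.extend (Sigma.mk i) (f ∘ x) 0 with hy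
  have hy0 : y = 0 := h y <| by
    rw [eval_diagonalForm]
    refine Finset.sum_eq_zero fun i' _ => ?_
    rcases eq_or_ne i' i with rfl | hi'
    · rw [show y ∘ Sigma.mk i' = f ∘ x from funext (sigma_mk_injective.extend_apply _ _),
        ← map_eval, hx, map_zero, mul_zero]
    · have : y ∘ Sigma.mk i' = 0 := funext fun j => Function.extend_apply' _ _ _ <| by
        rintro ⟨j', hj'⟩
        exact hi' (congrArg Sigma.fst hj').symm
      rw [this, MvPolynomial.eval_zero, constantCoeff_map, hφ, map_zero, mul_zero]
  funext j
  exact hf (by simpa [hy, sigma_mk_injective.extend_apply] using congrFun hy0 ⟨i, j⟩)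

end DiagonalForm

theorem PowerSeries.coeff_sum_X_pow_mul_eq_constantCoeff {R : Type*} [CommSemiring R]
    {d : ℕ} (b : Fin d → R⟦X⟧) (i : Fin d) (hb : ∀ i' < i, PowerSeries.X ^ d ∣ b i') :
    PowerSeries.coeff (i : ℕ) (∑ i' : Fin d, PowerSeries.X ^ (i' : ℕ) * b i') =
      PowerSeries.constantCoeff (b i) := by
  rw [map_sum, Finset.sum_eq_single i, PowerSeries.coeff_X_pow_mul', if_pos le_rfl, Nat.sub_self,
    PowerSeries.coeff_zero_eq_constantCoeff]
  · intro i' _ hi'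
    rcases lt_or_gt_of_ne hi' with hlt | hgt
    · have hdvd : PowerSeries.X ^ ((i' : ℕ) + d) ∣ PowerSeries.X ^ (i' : ℕ) * b i' := by
        rw [pow_add]
        exact mul_dvd_mul_left _ (hb i' hlt)
      exact PowerSeries.X_pow_dvd_iff.mp hdvd i (by omega)
    · exact PowerSeries.X_pow_dvd_iff.mp (dvd_mul_right _ _) i hgt
  · simp

section PowerSeries

variable {k : Type*} [CommRing k] {d : ℕ} {σ : Fin d → Type*}
  {φ : ∀ i, MvPolynomial (σ i) k}

theorem constantCoeff_eq_zero_of_eval_diagonalForm_eq_zero (hφ : ∀ i, (φ i).IsHomogeneous d)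
    (han : ∀ i, Anisotropic (φ i)) {y : (Σ i, σ i) → k⟦X⟧}
    (hy : eval y (diagonalForm PowerSeries.X fun i => map PowerSeries.C (φ i)) = 0)
    (s : Σ i, σ i) : PowerSeries.constantCoeff (y s) = 0 := by
  set b : Fin d → k⟦X⟧ := fun i => eval (y ∘ Sigma.mk i) (map PowerSeries.C (φ i))
  have hb : ∀ i, PowerSeries.constantCoeff (b i) =
      eval (PowerSeries.constantCoeff ∘ y ∘ Sigma.mk i) (φ i) := by
    intro i
    have hCC : (PowerSeries.constantCoeff.comp PowerSeries.C : k →+* k) = RingHom.id k :=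
      RingHom.ext fun _ => by simp
    rw [map_eval, map_map, hCC, map_id]
  suffices ∀ i j, PowerSeries.constantCoeff (y ⟨i, j⟩) = 0 from this s.1 s.2
  intro i
  induction i using WellFoundedLT.induction with
  | _ i ih =>
    have hdvd : ∀ i' < i, PowerSeries.X ^ d ∣ b i' := fun i' hi' =>
      ((hφ i').map _).pow_dvd_eval fun j => PowerSeries.X_dvd_iff.mpr (ih i' hi' j)
    have hbi : PowerSeries.constantCoeff (b i) = 0 := by
      rw [← PowerSeries.coeff_sum_X_pow_mul_eq_constantCoeff b i hdvd, ← eval_diagonalForm, hy,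
        map_zero]
    exact congrFun (han i _ (hb i ▸ hbi))

theorem anisotropic_diagonalForm_X (hφ : ∀ i, (φ i).IsHomogeneous d)
    (han : ∀ i, Anisotropic (φ i)) :
    Anisotropic (diagonalForm PowerSeries.X fun i => map PowerSeries.C (φ i)) := by
  have hQ := isHomogeneous_diagonalForm PowerSeries.X fun i => (hφ i).map PowerSeries.C
  suffices ∀ m y, eval y (diagonalForm PowerSeries.X fun i => map PowerSeries.C (φ i)) = 0 →
      ∀ s, PowerSeries.X ^ m ∣ y s by
    intro y hy
    funext s
    ext m
    exact PowerSeries.X_pow_dvd_iff.mp (this (m + 1) y hy s) m m.lt_succ_self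
  intro m
  induction m with
  | zero => simp
  | succ m ih =>
    intro y hy s
    choose z hz using fun s => PowerSeries.X_dvd_iff.mpr
      (constantCoeff_eq_zero_of_eval_diagonalForm_eq_zero hφ han hy s)
    rw [show y = (PowerSeries.X : k⟦X⟧) • z from funext hz, hQ.eval_smul] at hy
    rw [hz s, pow_succ']
    exact mul_dvd_mul_left _
      (ih z (PowerSeries.X_pow_mul_injective (hy.trans (mul_zero _).symm)) s)

end PowerSeries

theorem stmt_11 {k : Type*} [Field k] {d : ℕ} (hd : 1 ≤ d) (n : Fin d → ℕ)
    (φ : ∀ i : Fin d, MvPolynomial (Fin (n i)) k)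
    (hφ : ∀ i, (φ i).IsHomogeneous d) :
    Anisotropic (∑ i : Fin d, C ((HahnSeries.single (1 : ℤ) (1 : k)) ^ (i : ℕ)) *
        rename (fun j => (⟨i, j⟩ : Σ i : Fin d, Fin (n i)))
          (map (HahnSeries.C : k →+* LaurentSeries k) (φ i)) :
      MvPolynomial (Σ i : Fin d, Fin (n i)) (LaurentSeries k)) ↔
    ∀ i, Anisotropic (φ i) := by
  have hX : algebraMap k⟦X⟧ k⸨X⸩ PowerSeries.X = HahnSeries.single 1 1 :=
    HahnSeries.ofPowerSeries_X
  have hC : (algebraMap k⟦X⟧ k⸨X⸩).comp PowerSeries.C = HahnSeries.C :=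
    RingHom.ext HahnSeries.ofPowerSeries_C
  have hP : (∑ i : Fin d, C ((HahnSeries.single (1 : ℤ) (1 : k)) ^ (i : ℕ)) *
        rename (fun j => (⟨i, j⟩ : Σ i : Fin d, Fin (n i)))
          (map (HahnSeries.C : k →+* LaurentSeries k) (φ i))) =
      map (algebraMap k⟦X⟧ k⸨X⸩)
        (diagonalForm PowerSeries.X fun i => map PowerSeries.C (φ i)) := by
    rw [map_diagonalForm, hX]
    simp only [map_map, hC]
    rfl
  constructor
  · exact Anisotropic.of_diagonalForm HahnSeries.C_injective
      fun i => (hφ i).constantCoeff_eq_zero (by omega)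
  · intro han
    rw [hP]
    exact (anisotropic_diagonalForm_X hφ han).map_algebraMap
      (isHomogeneous_diagonalForm _ fun i => (hφ i).map _)
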